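/- For a binary parity-check constraint on bits b_1,...,b_d ∈ {0,1}, the sum b_1 + ... + b_d is even if and only if for every subset F of {1,...,d} of odd cardinality, the inequality ∑_{i∈F} b_i − ∑_{i∉F} b_i ≤ |F| − 1 holds. -/

import Mathlib

/-!
A 0/1 vector `b` is the indicator of its support `S`, and for every `F` the left-hand side of the
parity inequality equals `#F - #(F ∆ S)`. So the inequality for `F` fails exactly when `F = S`,
and the inequalities over all odd `F` hold iff `#S = ∑ i, b i` is not odd.
-/

open Finset

theorem Finset.card_symmDiff {α : Type*} [DecidableEq α] (s t : Finset α) :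
    #(symmDiff s t) = #(s \ t) + #(t \ s) :=
  card_union_of_disjoint disjoint_sdiff_sdiff

section

variable {ι R : Type*} [Fintype ι] [DecidableEq ι]

theorem exists_eq_boole_of_forall_eq_zero_or_eq_one [Zero R] [One R] {b : ι → R}
    (hb : ∀ i, b i = 0 ∨ b i = 1) : ∃ S : Finset ι, b = fun i ↦ if i ∈ S then 1 else 0 := by
  classical
  refine ⟨univ.filter (b · = 1), funext fun i ↦ ?_⟩
  rcases hb i with h | h <;> simp [h]

theorem sum_boole_sub_sum_compl_boole [AddCommGroupWithOne R] (S F : Finset ι) :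
    ∑ i ∈ F, (if i ∈ S then 1 else 0 : R) - ∑ i ∈ Fᶜ, (if i ∈ S then 1 else 0 : R) =
      #F - #(symmDiff F S) := by
  rw [sum_boole, sum_boole, filter_mem_eq_inter, filter_mem_eq_inter, inter_comm Fᶜ,
    ← sdiff_eq_inter_compl, card_symmDiff, ← card_sdiff_add_card_inter F S]
  push_cast
  abel

end

/-- A 0/1 parity-check constraint: the sum of the bits is even iff all parity
polytope inequalities indexed by odd-cardinality subsets hold. -/
theorem parity_polytope_characterization (d : ℕ) (b : Fin d → ℤ)
    (hb : ∀ i, b i = 0 ∨ b i = 1) :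
    Even (∑ i, b i) ↔
      ∀ F : Finset (Fin d), Odd F.card →
        (∑ i ∈ F, b i) - (∑ i ∈ Fᶜ, b i) ≤ (F.card : ℤ) - 1 := by
  obtain ⟨S, rfl⟩ := exists_eq_boole_of_forall_eq_zero_or_eq_one hb
  simp_rw [sum_boole_sub_sum_compl_boole]
  simp only [sum_boole, filter_mem_eq_inter, univ_inter, Int.even_coe_nat, sub_le_sub_iff_left,
    Nat.one_le_cast, one_le_card, symmDiff_nonempty, ← Nat.not_even_iff_odd]
  exact ⟨fun hS F hF hFS ↦ hF (hFS ▸ hS), fun h ↦ by_contra fun hS ↦ h S hS rfl⟩
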